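/- Let Φ and h be as in the canonical construction with d = 1 + rλ + sλ′, let Υ be a clause minimum prime pure Horn CNF representation of h, and define the labelings f_j from Υ as in the construction. Then for every index j ∈ [t] and every vertex y ∈ Y it holds that |f_j(y)| ≥ 1; combined with the upper bound for prime irredundant representations, |f_j(y)| = 1 for all j ∈ [t] and y ∈ Y. -/

import Mathlib

open Finset

/-- A clause, given by its (fin)sets of positive and negative variables. -/
structure Clause (V : Type*) where
  pos : Finset V
  neg : Finset V
deriving DecidableEq

namespace Clause

variable {V : Type*}

/-- A genuine clause: no variable occurs both positively and negatively. -/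
def IsClause (C : Clause V) : Prop := Disjoint C.pos C.neg

/-- Evaluation of a clause (as a disjunction of literals) under an assignment. -/
def eval (C : Clause V) (a : V → Bool) : Prop :=
  (∃ v ∈ C.pos, a v = true) ∨ (∃ v ∈ C.neg, a v = false)

/-- A pure (definite) Horn clause: exactly one positive literal, its head. -/
def IsPureHorn (C : Clause V) : Prop := ∃ v, C.pos = {v}

end Clause

variable {V : Type*}

/-- Conjunction (as a predicate on assignments) of a set of clauses. -/
def evalSet (S : Set (Clause V)) (a : V → Bool) : Prop := ∀ C ∈ S, C.eval a

/-- Conjunction of the clauses of a CNF, i.e. of a finite set of clauses. -/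
def evalCNF (Φ : Finset (Clause V)) (a : V → Bool) : Prop := ∀ C ∈ Φ, C.eval a

/-- A CNF represents a Boolean function `h`. -/
def Represents (Φ : Finset (Clause V)) (h : (V → Bool) → Prop) : Prop :=
  ∀ a, evalCNF Φ a ↔ h a

/-- A pure Horn CNF: all clauses are pure Horn. -/
def IsPureHornCNF (Φ : Finset (Clause V)) : Prop :=
  ∀ C ∈ Φ, C.IsClause ∧ C.IsPureHorn

/-- The forward chaining closure of a set `Q` of variables with respect to the
pure Horn CNF `Φ`: the smallest set containing `Q` such that whenever `Φ` contains
a clause `S → v` with `S` inside the set, also `v` belongs to it. -/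
def fcClosure (Φ : Finset (Clause V)) (Q : Set V) : Set V :=
  ⋂₀ {T : Set V | Q ⊆ T ∧ ∀ C ∈ Φ, ∀ v : V, C.pos = {v} → ↑C.neg ⊆ T → v ∈ T}

/-- `C` is an implicate of `h`: every assignment falsifying `C` falsifies `h`. -/
def Implicate (h : (V → Bool) → Prop) (C : Clause V) : Prop :=
  ∀ a, ¬ C.eval a → ¬ h a

/-- `C` is a prime implicate of `h`: an implicate from which no literal can be
deleted while remaining an implicate. -/
def PrimeImplicate [DecidableEq V] (h : (V → Bool) → Prop) (C : Clause V) : Prop :=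
  C.IsClause ∧ Implicate h C ∧
  (∀ v ∈ C.pos, ¬ Implicate h ⟨C.pos.erase v, C.neg⟩) ∧
  (∀ v ∈ C.neg, ¬ Implicate h ⟨C.pos, C.neg.erase v⟩)

/-- `C₁` and `C₂` are resolvable on `v`: `v` occurs positively in `C₁`, negatively in
`C₂`, and no other variable occurs with opposite signs in them. -/
def Resolvable (C₁ C₂ : Clause V) (v : V) : Prop :=
  v ∈ C₁.pos ∧ v ∈ C₂.neg ∧
  ∀ w, w ≠ v → ¬(w ∈ C₁.pos ∧ w ∈ C₂.neg) ∧ ¬(w ∈ C₁.neg ∧ w ∈ C₂.pos)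

/-- The resolvent `R(C₁,C₂) = (C₁ \ {v}) ∪ (C₂ \ {v̄})`. -/
def resolventOf [DecidableEq V] (C₁ C₂ : Clause V) (v : V) : Clause V :=
  ⟨C₁.pos.erase v ∪ C₂.pos, C₁.neg ∪ C₂.neg.erase v⟩

/-- A set of clauses closed under resolution. -/
def ResClosed [DecidableEq V] (S : Set (Clause V)) : Prop :=
  ∀ C₁ ∈ S, ∀ C₂ ∈ S, ∀ v, Resolvable C₁ C₂ v → resolventOf C₁ C₂ v ∈ S

/-- The resolution closure of a set of clauses. -/
def resClosure [DecidableEq V] (S : Set (Clause V)) : Set (Clause V) :=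
  ⋂₀ {T : Set (Clause V) | S ⊆ T ∧ ResClosed T}

/-- `I(h)`: the resolution closure of the set of prime implicates of `h`. -/
def implSet [DecidableEq V] (h : (V → Bool) → Prop) : Set (Clause V) :=
  resClosure {C | PrimeImplicate h C}

/-- An exclusive set of clauses of `h`. -/
def ExclusiveSet [DecidableEq V] (h : (V → Bool) → Prop) (Xs : Set (Clause V)) : Prop :=
  Xs ⊆ implSet h ∧
  ∀ C₁ ∈ implSet h, ∀ C₂ ∈ implSet h, ∀ v, Resolvable C₁ C₂ v →
    resolventOf C₁ C₂ v ∈ Xs → C₁ ∈ Xs ∧ C₂ ∈ Xs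

/-- The set of variables occurring in a CNF. -/
def varsOf [DecidableEq V] (Φ : Finset (Clause V)) : Finset V :=
  Φ.biUnion fun C => C.pos ∪ C.neg


/-- A Label Cover instance: a bipartite graph with parts `X` and `Y` and edge set `E`,
label sets `A` (for `X`-vertices) and `B` (for `Y`-vertices), and a nonempty
constraint relation `cst e ⊆ A × B` for every edge `e ∈ E`. -/
structure LabelCover (X Y A B : Type*) where
  E : Finset (X × Y)
  cst : X × Y → Finset (A × B)
  cst_nonempty : ∀ e ∈ E, (cst e).Nonempty

namespace LabelCover

variable {X Y A B : Type*}

/-- A labeling `(f, g)` covers an edge `(x,y)` if for every label `b ∈ g y` there is a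
label `a ∈ f x` with `(a, b)` admissible for the edge. -/
def Covers (I : LabelCover X Y A B) (f : X → Finset A) (g : Y → Finset B)
    (e : X × Y) : Prop :=
  ∀ b ∈ g e.2, ∃ a ∈ f e.1, (a, b) ∈ I.cst e

/-- A total-cover: a labeling (assigning a nonempty label set to every `Y`-vertex)
covering every edge. -/
def IsTotalCover (I : LabelCover X Y A B) (f : X → Finset A) (g : Y → Finset B) : Prop :=
  (∀ y, (g y).Nonempty) ∧ ∀ e ∈ I.E, I.Covers f g e

/-- A total-cover is tight if every `Y`-vertex receives exactly one label. -/
def Tight (g : Y → Finset B) : Prop := ∀ y, (g y).card = 1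

end LabelCover

/-- The cost of a labeling: the average number of labels assigned to `X`-vertices. -/
def lcCost {X A : Type*} [Fintype X] (f : X → Finset A) : ℚ :=
  (∑ x, ((f x).card : ℚ)) / (Fintype.card X : ℚ)


/-- The labels of the refined Label Cover instance: `L ∪ L′`, where `L = ⋃_x L_x`
with `L_x = {x} × A` and `L′ = ⋃_y L′_y` with `L′_y = {y} × B`. -/
abbrev Lab (X Y A B : Type*) := (X × A) ⊕ (Y × B)

/-- The propositional variables of the canonical pure Horn CNF construction:
`u ℓ` for labels `ℓ ∈ L ∪ L′`, `e x y i` and `el x y ℓ′ i` for edges `(x,y)`,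
labels `ℓ′ ∈ L′_y` and indices `i ∈ [d]`, and `v j` for `j ∈ [t]`. -/
inductive PV (X Y A B : Type*) where
  | u : Lab X Y A B → PV X Y A B
  | e : X → Y → ℕ → PV X Y A B
  | el : X → Y → B → ℕ → PV X Y A B
  | v : ℕ → PV X Y A B
deriving DecidableEq

section Canonical

variable {X Y A B : Type*} [Fintype X] [Fintype Y] [Fintype A] [Fintype B]
  [DecidableEq X] [DecidableEq Y] [DecidableEq A] [DecidableEq B]

/-- The (open) neighborhood `N(y) = {z ∈ X : (z,y) ∈ E}`. -/
def Nbr (I : LabelCover X Y A B) (y : Y) : Finset X :=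
  Finset.univ.filter fun z => (z, y) ∈ I.E

/-- Clauses (a): `u(ℓ) ∧ u(ℓ′) → e(x,y,ℓ′,i)` for `(x,y) ∈ E`, `(ℓ,ℓ′) ∈ Π_{(x,y)}`,
`i ∈ [d]`. -/
def clA (I : LabelCover X Y A B) (d : ℕ) : Finset (Clause (PV X Y A B)) :=
  (I.E ×ˢ Finset.Icc 1 d).biUnion fun p =>
    (I.cst p.1).image fun ab =>
      ⟨{PV.el p.1.1 p.1.2 ab.2 p.2},
       {PV.u (Sum.inl (p.1.1, ab.1)), PV.u (Sum.inr (p.1.2, ab.2))}⟩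

/-- Clauses (b): `⋀_{z ∈ N(y)} e(z,y,ℓ′,i) → e(x,y,i)` for `(x,y) ∈ E`, `ℓ′ ∈ L′_y`,
`i ∈ [d]`. -/
def clB (I : LabelCover X Y A B) (d : ℕ) : Finset (Clause (PV X Y A B)) :=
  ((I.E ×ˢ (Finset.univ : Finset B)) ×ˢ Finset.Icc 1 d).image fun p =>
    ⟨{PV.e p.1.1.1 p.1.1.2 p.2},
     (Nbr I p.1.1.2).image fun z => PV.el z p.1.1.2 p.1.2 p.2⟩

/-- Clauses (c): `e(x,y,i) → e(x,y,ℓ′,i)` for `(x,y) ∈ E`, `ℓ′ ∈ L′_y`, `i ∈ [d]`. -/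
def clC (I : LabelCover X Y A B) (d : ℕ) : Finset (Clause (PV X Y A B)) :=
  ((I.E ×ˢ (Finset.univ : Finset B)) ×ˢ Finset.Icc 1 d).image fun p =>
    ⟨{PV.el p.1.1.1 p.1.1.2 p.1.2 p.2}, {PV.e p.1.1.1 p.1.1.2 p.2}⟩

/-- The common body of the clauses (d): all variables `e(x,y,i)`, `(x,y) ∈ E`, `i ∈ [d]`. -/
def bigBody (I : LabelCover X Y A B) (d : ℕ) : Finset (PV X Y A B) :=
  (I.E ×ˢ Finset.Icc 1 d).image fun p => PV.e p.1.1 p.1.2 p.2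

/-- Clauses (d): `⋀_{i ∈ [d]} ⋀_{(x,y) ∈ E} e(x,y,i) → u(ℓ)` for `ℓ ∈ L ∪ L′`. -/
def clD (I : LabelCover X Y A B) (d : ℕ) : Finset (Clause (PV X Y A B)) :=
  (Finset.univ : Finset (Lab X Y A B)).image fun ℓ => ⟨{PV.u ℓ}, bigBody I d⟩

/-- Clauses (e): `v(j) → u(ℓ)` for `j ∈ [t]`, `ℓ ∈ L ∪ L′`. -/
def clE (X Y A B : Type*) [Fintype X] [Fintype Y] [Fintype A] [Fintype B]
    [DecidableEq X] [DecidableEq Y] [DecidableEq A] [DecidableEq B]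
    (t : ℕ) : Finset (Clause (PV X Y A B)) :=
  (Finset.Icc 1 t ×ˢ (Finset.univ : Finset (Lab X Y A B))).image fun p =>
    ⟨{PV.u p.2}, {PV.v p.1}⟩

/-- The canonical formula `Ψ`: clauses of types (a)–(d). -/
def PsiCNF (I : LabelCover X Y A B) (d : ℕ) : Finset (Clause (PV X Y A B)) :=
  clA I d ∪ clB I d ∪ clC I d ∪ clD I d

/-- The canonical formula `Φ`: clauses of types (a)–(e). -/
def PhiCNF (I : LabelCover X Y A B) (d t : ℕ) : Finset (Clause (PV X Y A B)) :=
  PsiCNF I d ∪ clE X Y A B t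

/-- The pure Horn function `h` represented by the canonical formula `Φ`. -/
def hFun (I : LabelCover X Y A B) (d t : ℕ) : (PV X Y A B → Bool) → Prop :=
  fun a => evalCNF (PhiCNF I d t) a

/-- The pure Horn function `g` represented by the canonical formula `Ψ`. -/
def gFun (I : LabelCover X Y A B) (d : ℕ) : (PV X Y A B → Bool) → Prop :=
  fun a => evalCNF (PsiCNF I d) a

end Canonical


/-- The `X`-side labeling extracted from a representation `Υ` of `h`:
`f_j(x) = S_j ∩ L_x`, where `S_j` is the set of labels `ℓ` such that the clause
`v(j) → u(ℓ)` belongs to `Υ`. -/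
def fjX {X Y A B : Type*} [Fintype X] [Fintype Y] [Fintype A] [Fintype B]
    [DecidableEq X] [DecidableEq Y] [DecidableEq A] [DecidableEq B]
    (Υ : Finset (Clause (PV X Y A B))) (j : ℕ) (x : X) : Finset A :=
  Finset.univ.filter fun a =>
    (⟨{PV.u (Sum.inl (x, a))}, {PV.v j}⟩ : Clause (PV X Y A B)) ∈ Υ

/-- The `Y`-side labeling extracted from a representation `Υ` of `h`:
`f_j(y) = S_j ∩ L′_y`, where `S_j` is the set of labels `ℓ` such that the clause
`v(j) → u(ℓ)` belongs to `Υ`. -/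
def fjY {X Y A B : Type*} [Fintype X] [Fintype Y] [Fintype A] [Fintype B]
    [DecidableEq X] [DecidableEq Y] [DecidableEq A] [DecidableEq B]
    (Υ : Finset (Clause (PV X Y A B))) (j : ℕ) (y : Y) : Finset B :=
  Finset.univ.filter fun b =>
    (⟨{PV.u (Sum.inr (y, b))}, {PV.v j}⟩ : Clause (PV X Y A B)) ∈ Υ


/-!
Write `H` for the set of heads `w` of the clauses `v(j) → w` of `Υ`; its labels form `f_j`.
Because `v(j)` forces every variable of `Φ`, every model of `Ψ` that is true on `H` is true on all
`u(ℓ)`, `e(x,y,i)` and `e(x,y,ℓ′,i)`: setting `v(j)` true and the other `v`'s false turns it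
into a model of `Υ`. Replacing the clauses `v(j) → w` of `Υ` by all `v(j) → u(ℓ)` keeps a
representation, so by minimality `|H| ≤ rλ + sλ′ < d`, and some index `i₀ ∈ [d]` occurs in no
variable of `H`.

Suppose no label `c` of `y` in `H` is matched, on every edge `(z,y)`, by an admissible label of `z`
in `H`. Then the variables of `y` at index `i₀` can be switched off, except for the `e(z,y,c,i₀)`
forced by clauses (a), giving a model of `Ψ` that is true on `H` but false on every `u(ℓ) ∉ H`;
so all `u(ℓ)` lie in `H`, and `y` is covered after all by feasibility. Hence `f_j(y)` contains such
a `c`. Any other label `b ∈ f_j(y)` would make `v(j) → u(y,b)` redundant: once `y` is covered,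
raising `u(y,b)` keeps `Ψ` true, so `u(y,b)` already follows from the remaining heads, against
minimality.
-/

namespace Clause

variable {V : Type*}

lemma eval_mk_singleton {w : V} {S : Finset V} {a : V → Bool} :
    (⟨{w}, S⟩ : Clause V).eval a ↔ a w = true ∨ ∃ z ∈ S, a z = false := by
  simp [eval]

lemma not_eval_iff {C : Clause V} {a : V → Bool} :
    ¬ C.eval a ↔ (∀ z ∈ C.pos, a z = false) ∧ ∀ z ∈ C.neg, a z = true := by
  simp [eval]

lemma head_of_eval {w : V} {S : Finset V} {a : V → Bool} (h : (⟨{w}, S⟩ : Clause V).eval a)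
    (hS : ∀ z ∈ S, a z = true) : a w = true := by
  rcases eval_mk_singleton.1 h with h | ⟨z, hz, hf⟩
  · exact h
  · simp [hS z hz] at hf

lemma eval_congr {C : Clause V} {a a' : V → Bool} (hpos : ∀ z ∈ C.pos, a z = a' z)
    (hneg : ∀ z ∈ C.neg, a z = a' z) : C.eval a ↔ C.eval a' := by
  unfold eval
  refine or_congr (exists_congr fun z => and_congr_right fun hz => ?_)
    (exists_congr fun z => and_congr_right fun hz => ?_)
  · rw [hpos z hz]
  · rw [hneg z hz]

lemma eval_update_true [DecidableEq V] {C : Clause V} {a : V → Bool} {z : V}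
    (hz : z ∉ C.neg) (h : C.eval a) : C.eval (Function.update a z true) := by
  rcases h with ⟨w, hw, haw⟩ | ⟨w, hw, haw⟩
  · refine Or.inl ⟨w, hw, ?_⟩
    by_cases hwz : w = z
    · simp [hwz]
    · rwa [Function.update_of_ne hwz]
  · exact Or.inr ⟨w, hw, by rwa [Function.update_of_ne (ne_of_mem_of_not_mem hw hz)]⟩

end Clause

structure IsPrimePureHornRep {V : Type*} [DecidableEq V] (Υ : Finset (Clause V))
    (h : (V → Bool) → Prop) : Prop where
  pureHorn : IsPureHornCNF Υ
  prime : ∀ C ∈ Υ, PrimeImplicate h C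
  represents : Represents Υ h

def IsClauseMinimum {V : Type*} (Υ : Finset (Clause V)) (h : (V → Bool) → Prop) : Prop :=
  ∀ Υ' : Finset (Clause V), IsPureHornCNF Υ' → Represents Υ' h → Υ.card ≤ Υ'.card

namespace LabelCover

variable {X Y A B : Type*} {I : LabelCover X Y A B}

def CoveredAt (I : LabelCover X Y A B) (S : Set (Lab X Y A B)) (y : Y) : Prop :=
  ∃ c, Sum.inr (y, c) ∈ S ∧ ∀ z, (z, y) ∈ I.E → ∃ α, Sum.inl (z, α) ∈ S ∧ (α, c) ∈ I.cst (z, y)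

lemma CoveredAt.mono {S T : Set (Lab X Y A B)} {y : Y} (hST : S ⊆ T) (h : I.CoveredAt S y) :
    I.CoveredAt T y := by
  obtain ⟨c, hc, hwit⟩ := h
  refine ⟨c, hST hc, fun z hz => ?_⟩
  obtain ⟨α, hα, hcst⟩ := hwit z hz
  exact ⟨α, hST hα, hcst⟩

lemma IsTotalCover.coveredAt_univ {f : X → Finset A} {g : Y → Finset B}
    (h : I.IsTotalCover f g) (y : Y) : I.CoveredAt Set.univ y := by
  obtain ⟨c, hc⟩ := h.1 y
  refine ⟨c, trivial, fun z hz => ?_⟩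
  obtain ⟨α, -, hcst⟩ := h.2 (z, y) hz c hc
  exact ⟨α, trivial, hcst⟩

end LabelCover

namespace PV

variable {X Y A B : Type*}

def idx : PV X Y A B → ℕ
  | e _ _ i => i
  | el _ _ _ i => i
  | _ => 0

/-- The variables that occur as heads of clauses of `Φ`. -/
def Active (I : LabelCover X Y A B) (d : ℕ) : PV X Y A B → Prop
  | u _ => True
  | e x y i => (x, y) ∈ I.E ∧ i ∈ Icc 1 d
  | el x y _ i => (x, y) ∈ I.E ∧ i ∈ Icc 1 d
  | v _ => False

lemma Active.ne_v {I : LabelCover X Y A B} {d : ℕ} {w : PV X Y A B} (h : w.Active I d) (q : ℕ) :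
    w ≠ v q := by
  rintro rfl
  exact h

def withVFalse (a : PV X Y A B → Bool) : PV X Y A B → Bool
  | v _ => false
  | w => a w

lemma withVFalse_of_ne {a : PV X Y A B → Bool} {w : PV X Y A B} (h : ∀ q, w ≠ v q) :
    withVFalse a w = a w := by
  cases w <;> simp_all [withVFalse]

end PV

/-- The `u`-part of `headsOfV Υ j` is the set `S_j`. -/
noncomputable def headsOfV {X Y A B : Type*} (Υ : Finset (Clause (PV X Y A B))) (j : ℕ) :
    Finset (PV X Y A B) :=
  Υ.preimage (fun w => ⟨{w}, {PV.v j}⟩) fun _ _ _ _ h => by simpa using congrArg Clause.pos h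

lemma mem_headsOfV {X Y A B : Type*} {Υ : Finset (Clause (PV X Y A B))} {j : ℕ}
    {w : PV X Y A B} : w ∈ headsOfV Υ j ↔ ⟨{w}, {PV.v j}⟩ ∈ Υ :=
  Finset.mem_preimage

section ClauseShapes

variable {X Y A B : Type*} [DecidableEq X] [DecidableEq Y] [DecidableEq A] [DecidableEq B]
  {I : LabelCover X Y A B} {d : ℕ} {C : Clause (PV X Y A B)}

lemma mem_clA : C ∈ clA I d ↔ ∃ x y i α b, (x, y) ∈ I.E ∧ i ∈ Icc 1 d ∧
    (α, b) ∈ I.cst (x, y) ∧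
    C = ⟨{PV.el x y b i}, {PV.u (Sum.inl (x, α)), PV.u (Sum.inr (y, b))}⟩ := by
  simp only [clA, mem_biUnion, mem_product, mem_image]
  constructor
  · rintro ⟨⟨⟨x, y⟩, i⟩, ⟨hE, hi⟩, ⟨α, b⟩, hc, rfl⟩
    exact ⟨x, y, i, α, b, hE, hi, hc, rfl⟩
  · rintro ⟨x, y, i, α, b, hE, hi, hc, rfl⟩
    exact ⟨⟨⟨x, y⟩, i⟩, ⟨hE, hi⟩, ⟨α, b⟩, hc, rfl⟩

lemma mem_clB [Fintype X] [Fintype B] : C ∈ clB I d ↔ ∃ x y i b, (x, y) ∈ I.E ∧ i ∈ Icc 1 d ∧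
    C = ⟨{PV.e x y i}, (Nbr I y).image fun z => PV.el z y b i⟩ := by
  simp only [clB, mem_image, mem_product, mem_univ, and_true]
  constructor
  · rintro ⟨⟨⟨⟨x, y⟩, b⟩, i⟩, ⟨hE, hi⟩, rfl⟩
    exact ⟨x, y, i, b, hE, hi, rfl⟩
  · rintro ⟨x, y, i, b, hE, hi, rfl⟩
    exact ⟨⟨⟨⟨x, y⟩, b⟩, i⟩, ⟨hE, hi⟩, rfl⟩

lemma mem_clC [Fintype B] : C ∈ clC I d ↔ ∃ x y i b, (x, y) ∈ I.E ∧ i ∈ Icc 1 d ∧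
    C = ⟨{PV.el x y b i}, {PV.e x y i}⟩ := by
  simp only [clC, mem_image, mem_product, mem_univ, and_true]
  constructor
  · rintro ⟨⟨⟨⟨x, y⟩, b⟩, i⟩, ⟨hE, hi⟩, rfl⟩
    exact ⟨x, y, i, b, hE, hi, rfl⟩
  · rintro ⟨x, y, i, b, hE, hi, rfl⟩
    exact ⟨⟨⟨⟨x, y⟩, b⟩, i⟩, ⟨hE, hi⟩, rfl⟩

lemma mem_bigBody {w : PV X Y A B} :
    w ∈ bigBody I d ↔ ∃ x y i, (x, y) ∈ I.E ∧ i ∈ Icc 1 d ∧ w = PV.e x y i := by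
  simp only [bigBody, mem_image, mem_product]
  constructor
  · rintro ⟨⟨⟨x, y⟩, i⟩, ⟨hE, hi⟩, rfl⟩
    exact ⟨x, y, i, hE, hi, rfl⟩
  · rintro ⟨x, y, i, hE, hi, rfl⟩
    exact ⟨⟨⟨x, y⟩, i⟩, ⟨hE, hi⟩, rfl⟩

/-- Cuts every derivation through `y` at the index `i₀`: on `y` and `i₀` only the variables
`e(x,y,c,i₀)` forced by a clause (a) with body in `Q` stay true. -/
def cutModel [Fintype A] (I : LabelCover X Y A B) (Q : Finset (PV X Y A B)) (y : Y) (i₀ : ℕ) :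
    PV X Y A B → Bool
  | PV.u ℓ => decide (PV.u ℓ ∈ Q)
  | PV.e _ y' i => !decide (y' = y ∧ i = i₀)
  | PV.el x y' c i => !decide (y' = y ∧ i = i₀) ||
      decide (PV.u (Sum.inr (y, c)) ∈ Q ∧ ∃ α, PV.u (Sum.inl (x, α)) ∈ Q ∧ (α, c) ∈ I.cst (x, y))
  | PV.v _ => true

lemma cutModel_of_mem [Fintype A] {Q : Finset (PV X Y A B)} {y : Y} {i₀ : ℕ}
    (hQ : ∀ w ∈ Q, w.idx ≠ i₀) {w : PV X Y A B} (hw : w ∈ Q) : cutModel I Q y i₀ w = true := by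
  have := hQ w hw
  cases w <;> simp_all [cutModel, PV.idx]

end ClauseShapes

section Canonical

variable {X Y A B : Type*} [Fintype X] [Fintype Y] [Fintype A] [Fintype B]
  [DecidableEq X] [DecidableEq Y] [DecidableEq A] [DecidableEq B]
  {I : LabelCover X Y A B} {d t : ℕ} {C : Clause (PV X Y A B)} {a : PV X Y A B → Bool}
  {x : X} {y : Y} {i : ℕ} {Υ : Finset (Clause (PV X Y A B))} {j : ℕ}

lemma mem_clD : C ∈ clD I d ↔ ∃ ℓ, C = ⟨{PV.u ℓ}, bigBody I d⟩ := by
  simp only [clD, mem_image, mem_univ, true_and, eq_comm]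

lemma mem_clE : C ∈ clE X Y A B t ↔ ∃ j ℓ, j ∈ Icc 1 t ∧ C = ⟨{PV.u ℓ}, {PV.v j}⟩ := by
  simp only [clE, mem_image, mem_product, mem_univ, and_true]
  constructor
  · rintro ⟨⟨j, ℓ⟩, hj, rfl⟩
    exact ⟨j, ℓ, hj, rfl⟩
  · rintro ⟨j, ℓ, hj, rfl⟩
    exact ⟨⟨j, ℓ⟩, hj, rfl⟩

lemma mem_PsiCNF : C ∈ PsiCNF I d ↔ C ∈ clA I d ∨ C ∈ clB I d ∨ C ∈ clC I d ∨ C ∈ clD I d := by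
  simp only [PsiCNF, mem_union, or_assoc]

lemma mem_fjY_iff {b : B} : b ∈ fjY Υ j y ↔ PV.u (Sum.inr (y, b)) ∈ headsOfV Υ j := by
  simp [fjY, mem_headsOfV]

lemma psi_el_of_u (ha : evalCNF (PsiCNF I d) a) (hE : (x, y) ∈ I.E) (hi : i ∈ Icc 1 d)
    {α : A} {b : B} (hc : (α, b) ∈ I.cst (x, y)) (hx : a (PV.u (Sum.inl (x, α))) = true)
    (hy : a (PV.u (Sum.inr (y, b))) = true) : a (PV.el x y b i) = true :=
  Clause.head_of_eval
    (ha _ (mem_PsiCNF.2 (Or.inl (mem_clA.2 ⟨x, y, i, α, b, hE, hi, hc, rfl⟩)))) (by simp [hx, hy])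

lemma psi_e_of_el (ha : evalCNF (PsiCNF I d) a) (hE : (x, y) ∈ I.E) (hi : i ∈ Icc 1 d) {b : B}
    (h : ∀ z, (z, y) ∈ I.E → a (PV.el z y b i) = true) : a (PV.e x y i) = true :=
  Clause.head_of_eval
    (ha _ (mem_PsiCNF.2 (Or.inr (Or.inl (mem_clB.2 ⟨x, y, i, b, hE, hi, rfl⟩)))))
    (by simpa [Nbr] using h)

lemma psi_el_of_e (ha : evalCNF (PsiCNF I d) a) (hE : (x, y) ∈ I.E) (hi : i ∈ Icc 1 d) (b : B)
    (h : a (PV.e x y i) = true) : a (PV.el x y b i) = true :=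
  Clause.head_of_eval
    (ha _ (mem_PsiCNF.2 (Or.inr (Or.inr (Or.inl (mem_clC.2 ⟨x, y, i, b, hE, hi, rfl⟩))))))
    (by simpa using h)

lemma psi_u_of_e (ha : evalCNF (PsiCNF I d) a)
    (h : ∀ x y i, (x, y) ∈ I.E → i ∈ Icc 1 d → a (PV.e x y i) = true) (ℓ : Lab X Y A B) :
    a (PV.u ℓ) = true :=
  Clause.head_of_eval (ha _ (mem_PsiCNF.2 (Or.inr (Or.inr (Or.inr (mem_clD.2 ⟨ℓ, rfl⟩))))))
    fun w hw => by
      obtain ⟨x, y, i, hE, hi, rfl⟩ := mem_bigBody.1 hw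
      exact h x y i hE hi

lemma phi_u_of_v (ha : evalCNF (PhiCNF I d t) a) {j : ℕ} (hj : j ∈ Icc 1 t)
    (hv : a (PV.v j) = true) (ℓ : Lab X Y A B) : a (PV.u ℓ) = true :=
  Clause.head_of_eval (ha _ (mem_union_right _ (mem_clE.2 ⟨j, ℓ, hj, rfl⟩))) (by simpa using hv)

lemma psi_of_phi (ha : evalCNF (PhiCNF I d t) a) : evalCNF (PsiCNF I d) a :=
  fun C hC => ha C (mem_union_left _ hC)

lemma psi_e_of_coveredAt (ha : evalCNF (PsiCNF I d) a)
    (hcov : I.CoveredAt {ℓ | a (PV.u ℓ) = true} y) (hE : (x, y) ∈ I.E) (hi : i ∈ Icc 1 d) :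
    a (PV.e x y i) = true := by
  obtain ⟨c, hc, hwit⟩ := hcov
  refine psi_e_of_el ha hE hi (b := c) fun z hz => ?_
  obtain ⟨α, hα, hcst⟩ := hwit z hz
  exact psi_el_of_u ha hz hi hcst hα hc

lemma psi_active_of_forall_u (hfeas : ∀ y, I.CoveredAt Set.univ y) (ha : evalCNF (PsiCNF I d) a)
    (hu : ∀ ℓ, a (PV.u ℓ) = true) {w : PV X Y A B} (hw : w.Active I d) : a w = true := by
  have he : ∀ x y i, (x, y) ∈ I.E → i ∈ Icc 1 d → a (PV.e x y i) = true := fun x y i hE hi =>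
    psi_e_of_coveredAt ha ((hfeas y).mono fun ℓ _ => hu ℓ) hE hi
  cases w with
  | u ℓ => exact hu ℓ
  | e x y i => exact he x y i hw.1 hw.2
  | el x y b i => exact psi_el_of_e ha hw.1 hw.2 b (he x y i hw.1 hw.2)
  | v q => exact hw.elim

lemma phi_active_of_v (hfeas : ∀ y, I.CoveredAt Set.univ y) (ha : evalCNF (PhiCNF I d t) a)
    {j : ℕ} (hj : j ∈ Icc 1 t) (hv : a (PV.v j) = true) {w : PV X Y A B} (hw : w.Active I d) :
    a w = true :=
  psi_active_of_forall_u hfeas (psi_of_phi ha) (phi_u_of_v ha hj hv) hw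

lemma exists_active_head_of_mem_phi {C : Clause (PV X Y A B)} (hC : C ∈ PhiCNF I d t) :
    ∃ w, C.pos = {w} ∧ w.Active I d := by
  rcases mem_union.1 hC with hC | hC
  · rcases mem_PsiCNF.1 hC with hC | hC | hC | hC
    · obtain ⟨x, y, i, α, b, hE, hi, -, rfl⟩ := mem_clA.1 hC
      exact ⟨_, rfl, hE, hi⟩
    · obtain ⟨x, y, i, b, hE, hi, rfl⟩ := mem_clB.1 hC
      exact ⟨_, rfl, hE, hi⟩
    · obtain ⟨x, y, i, b, hE, hi, rfl⟩ := mem_clC.1 hC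
      exact ⟨_, rfl, hE, hi⟩
    · obtain ⟨ℓ, rfl⟩ := mem_clD.1 hC
      exact ⟨_, rfl, trivial⟩
  · obtain ⟨j, ℓ, -, rfl⟩ := mem_clE.1 hC
    exact ⟨_, rfl, trivial⟩

lemma v_notMem_of_mem_psi {C : Clause (PV X Y A B)} (hC : C ∈ PsiCNF I d) (q : ℕ) :
    PV.v q ∉ C.pos ∧ PV.v q ∉ C.neg := by
  rcases mem_PsiCNF.1 hC with hC | hC | hC | hC
  · obtain ⟨x, y, i, α, b, -, -, -, rfl⟩ := mem_clA.1 hC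
    simp
  · obtain ⟨x, y, i, b, -, -, rfl⟩ := mem_clB.1 hC
    simp
  · obtain ⟨x, y, i, b, -, -, rfl⟩ := mem_clC.1 hC
    simp
  · obtain ⟨ℓ, rfl⟩ := mem_clD.1 hC
    simp [mem_bigBody]

lemma mem_Icc_of_v_mem_phi {C : Clause (PV X Y A B)} (hC : C ∈ PhiCNF I d t) {q : ℕ}
    (hq : PV.v q ∈ C.neg) : q ∈ Icc 1 t := by
  rcases mem_union.1 hC with hC | hC
  · exact absurd hq (v_notMem_of_mem_psi hC q).2
  · obtain ⟨j, ℓ, hj, rfl⟩ := mem_clE.1 hC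
    obtain rfl : q = j := by simpa using hq
    exact hj

lemma psi_withVFalse_iff : evalCNF (PsiCNF I d) (PV.withVFalse a) ↔ evalCNF (PsiCNF I d) a :=
  forall₂_congr fun _ hC => Clause.eval_congr
    (fun _ hz => PV.withVFalse_of_ne fun q h => (v_notMem_of_mem_psi hC q).1 (h ▸ hz))
    (fun _ hz => PV.withVFalse_of_ne fun q h => (v_notMem_of_mem_psi hC q).2 (h ▸ hz))

lemma phi_withVFalse_of_psi (ha : evalCNF (PsiCNF I d) a) :
    evalCNF (PhiCNF I d t) (PV.withVFalse a) := by
  intro C hC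
  rcases mem_union.1 hC with hC | hC
  · exact psi_withVFalse_iff.2 ha C hC
  · obtain ⟨j, ℓ, -, rfl⟩ := mem_clE.1 hC
    exact Or.inr ⟨PV.v j, mem_singleton_self _, rfl⟩

lemma active_of_implicate (hC : C.IsClause) (himp : Implicate (hFun I d t) C) {w : PV X Y A B}
    (hpos : C.pos = {w}) : w.Active I d := by
  classical
  by_contra hw
  refine himp (fun z => decide (z ≠ w)) (Clause.not_eval_iff.2 ⟨?_, ?_⟩) fun C' hC' => ?_
  · simp [hpos]
  · intro z hz
    have : z ≠ w := fun h => disjoint_left.1 hC (hpos ▸ mem_singleton_self w) (h ▸ hz)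
    simpa using this
  · obtain ⟨w', hpos', hw'⟩ := exists_active_head_of_mem_phi hC'
    have hne : w' ≠ w := fun h => hw (h ▸ hw')
    exact Or.inl ⟨w', hpos' ▸ mem_singleton_self _, by simpa using hne⟩

/-- Otherwise `v(q)` does not occur in `Φ`, and setting it to true turns a counterexample to the
shortened clause into one for `C`. -/
lemma mem_Icc_of_v_mem_neg (hC : PrimeImplicate (hFun I d t) C) {q : ℕ} (hq : PV.v q ∈ C.neg) :
    q ∈ Icc 1 t := by
  by_contra hqt
  refine hC.2.2.2 (PV.v q) hq fun a hne hh => ?_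
  obtain ⟨hpos, hneg⟩ := Clause.not_eval_iff.1 hne
  refine hC.2.1 (Function.update a (PV.v q) true)
    (Clause.not_eval_iff.2 ⟨fun z hz => ?_, fun z hz => ?_⟩) fun C' hC' => ?_
  · rw [Function.update_of_ne (ne_of_mem_of_not_mem hz (disjoint_right.1 hC.1 hq))]
    exact hpos z hz
  · by_cases hzq : z = PV.v q
    · simp [hzq]
    · rw [Function.update_of_ne hzq]
      exact hneg z (mem_erase.2 ⟨hzq, hz⟩)
  · obtain ⟨w, hw, hact⟩ := exists_active_head_of_mem_phi hC'
    refine (Clause.eval_congr (fun z hz => ?_) fun z hz => ?_).1 (hh C' hC')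
    · rw [hw, mem_singleton] at hz
      rw [Function.update_of_ne (hz ▸ hact.ne_v q)]
    · rw [Function.update_of_ne fun (h : z = PV.v q) => hqt (mem_Icc_of_v_mem_phi hC' (h ▸ hz))]

lemma neg_eq_singleton_v (hfeas : ∀ y, I.CoveredAt Set.univ y) (hC : PrimeImplicate (hFun I d t) C)
    {w : PV X Y A B} (hpos : C.pos = {w}) {q : ℕ} (hq : PV.v q ∈ C.neg) : C.neg = {PV.v q} := by
  have hw := active_of_implicate hC.1 hC.2.1 hpos
  refine eq_singleton_iff_unique_mem.2 ⟨hq, fun w' hw' => ?_⟩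
  by_contra hne
  refine hC.2.2.2 w' hw' fun a hna hh => ?_
  obtain ⟨hpos', hneg'⟩ := Clause.not_eval_iff.1 hna
  have hv := hneg' _ (mem_erase.2 ⟨Ne.symm hne, hq⟩)
  simpa [hpos' w (hpos ▸ mem_singleton_self w)] using
    phi_active_of_v hfeas hh (mem_Icc_of_v_mem_neg hC hq) hv hw

lemma IsPrimePureHornRep.exists_active_head (hΥ : IsPrimePureHornRep Υ (hFun I d t))
    {C : Clause (PV X Y A B)} (hC : C ∈ Υ) : ∃ w, C.pos = {w} ∧ w.Active I d := by
  obtain ⟨w, hw⟩ := (hΥ.pureHorn C hC).2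
  exact ⟨w, hw, active_of_implicate (hΥ.prime C hC).1 (hΥ.prime C hC).2.1 hw⟩

lemma IsPrimePureHornRep.eq_of_v_mem_neg (hΥ : IsPrimePureHornRep Υ (hFun I d t))
    (hfeas : ∀ y, I.CoveredAt Set.univ y) {C : Clause (PV X Y A B)} (hC : C ∈ Υ) {q : ℕ}
    (hq : PV.v q ∈ C.neg) : ∃ w, C = ⟨{w}, {PV.v q}⟩ ∧ w.Active I d := by
  obtain ⟨w, hpos, hw⟩ := hΥ.exists_active_head hC
  refine ⟨w, ?_, hw⟩
  rw [← hpos, ← neg_eq_singleton_v hfeas (hΥ.prime C hC) hpos hq]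

lemma IsPrimePureHornRep.upsilon_of_psi (hΥ : IsPrimePureHornRep Υ (hFun I d t))
    (hfeas : ∀ y, I.CoveredAt Set.univ y) (ha : evalCNF (PsiCNF I d) a)
    (hheads : ∀ w ∈ headsOfV Υ j, a w = true) :
    evalCNF Υ (Function.update (PV.withVFalse a) (PV.v j) true) := by
  intro C hC
  by_cases hv : PV.v j ∈ C.neg
  · obtain ⟨w, rfl, hw⟩ := hΥ.eq_of_v_mem_neg hfeas hC hv
    refine Or.inl ⟨w, mem_singleton_self w, ?_⟩
    rw [Function.update_of_ne (hw.ne_v j), PV.withVFalse_of_ne hw.ne_v]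
    exact hheads w (mem_headsOfV.2 hC)
  · obtain ⟨w, hpos, hw⟩ := hΥ.exists_active_head hC
    refine (Clause.eval_congr (fun z hz => ?_) fun z hz => ?_).1
      ((hΥ.represents _).2 (phi_withVFalse_of_psi ha) C hC)
    · rw [hpos, mem_singleton] at hz
      rw [Function.update_of_ne (hz ▸ hw.ne_v j)]
    · rw [Function.update_of_ne (ne_of_mem_of_not_mem hz hv)]

lemma IsPrimePureHornRep.active_of_psi (hΥ : IsPrimePureHornRep Υ (hFun I d t))
    (hfeas : ∀ y, I.CoveredAt Set.univ y) (hj : j ∈ Icc 1 t) (ha : evalCNF (PsiCNF I d) a)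
    (hheads : ∀ w ∈ headsOfV Υ j, a w = true) {w : PV X Y A B} (hw : w.Active I d) :
    a w = true := by
  have := phi_active_of_v hfeas ((hΥ.represents _).1 (hΥ.upsilon_of_psi hfeas ha hheads)) hj
    (Function.update_self _ _ _) hw
  rwa [Function.update_of_ne (hw.ne_v j), PV.withVFalse_of_ne hw.ne_v] at this

lemma IsPrimePureHornRep.psi_of_vFree (hΥ : IsPrimePureHornRep Υ (hFun I d t))
    (h : ∀ C ∈ Υ, (∀ q, PV.v q ∉ C.neg) → C.eval a) : evalCNF (PsiCNF I d) a := by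
  refine psi_withVFalse_iff.1 (psi_of_phi ((hΥ.represents _).1 fun C hC => ?_))
  by_cases hv : ∃ q, PV.v q ∈ C.neg
  · obtain ⟨q, hq⟩ := hv
    exact Or.inr ⟨PV.v q, hq, rfl⟩
  · push Not at hv
    obtain ⟨w, hpos, hw⟩ := hΥ.exists_active_head hC
    refine (Clause.eval_congr (fun z hz => ?_) fun z hz => ?_).2 (h C hC hv)
    · rw [hpos, mem_singleton] at hz
      exact PV.withVFalse_of_ne (hz ▸ hw.ne_v)
    · exact PV.withVFalse_of_ne fun q (h : z = PV.v q) => hv q (h ▸ hz)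

def replaceVClauses (Υ : Finset (Clause (PV X Y A B))) (j : ℕ) : Finset (Clause (PV X Y A B)) :=
  Υ.filter (fun C => PV.v j ∉ C.neg) ∪ univ.image fun ℓ => ⟨{PV.u ℓ}, {PV.v j}⟩

lemma IsPrimePureHornRep.represents_replaceVClauses (hΥ : IsPrimePureHornRep Υ (hFun I d t))
    (hfeas : ∀ y, I.CoveredAt Set.univ y) (hj : j ∈ Icc 1 t) :
    Represents (replaceVClauses Υ j) (hFun I d t) := by
  intro a
  constructor
  · intro ha
    have hkept : ∀ C ∈ Υ, PV.v j ∉ C.neg → C.eval a := fun C hC hv =>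
      ha C (mem_union_left _ (mem_filter.2 ⟨hC, hv⟩))
    refine (hΥ.represents a).1 fun C hC => ?_
    by_cases hv : PV.v j ∈ C.neg
    · cases hvj : a (PV.v j)
      · exact Or.inr ⟨_, hv, hvj⟩
      have hu : ∀ ℓ, a (PV.u ℓ) = true := fun ℓ => Clause.head_of_eval
        (ha _ (mem_union_right _ (mem_image_of_mem _ (mem_univ ℓ)))) (by simpa using hvj)
      have hpsi := hΥ.psi_of_vFree fun C' hC' hv' => hkept C' hC' (hv' j)
      obtain ⟨w, hpos, hw⟩ := hΥ.exists_active_head hC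
      exact Or.inl ⟨w, hpos ▸ mem_singleton_self w, psi_active_of_forall_u hfeas hpsi hu hw⟩
    · exact hkept C hC hv
  · intro hh C hC
    rcases mem_union.1 hC with hC | hC
    · exact (hΥ.represents a).2 hh C (mem_filter.1 hC).1
    · obtain ⟨ℓ, -, rfl⟩ := mem_image.1 hC
      exact hh _ (mem_union_right _ (mem_clE.2 ⟨j, ℓ, hj, rfl⟩))

lemma IsPrimePureHornRep.card_filter_v_mem_le (hΥ : IsPrimePureHornRep Υ (hFun I d t))
    (hfeas : ∀ y, I.CoveredAt Set.univ y) (hj : j ∈ Icc 1 t)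
    (hmin : IsClauseMinimum Υ (hFun I d t)) :
    (Υ.filter fun C => PV.v j ∈ C.neg).card ≤ Fintype.card (Lab X Y A B) := by
  have hPH : IsPureHornCNF (replaceVClauses Υ j) := by
    intro C hC
    rcases mem_union.1 hC with hC | hC
    · exact hΥ.pureHorn C (mem_filter.1 hC).1
    · obtain ⟨ℓ, -, rfl⟩ := mem_image.1 hC
      exact ⟨by simp [Clause.IsClause], _, rfl⟩
  have hle := hmin _ hPH (hΥ.represents_replaceVClauses hfeas hj)
  have hunion := card_union_le (Υ.filter fun C => PV.v j ∉ C.neg)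
    (univ.image fun ℓ => (⟨{PV.u ℓ}, {PV.v j}⟩ : Clause (PV X Y A B)))
  have himage := card_image_le (s := (univ : Finset (Lab X Y A B)))
    (f := fun ℓ => (⟨{PV.u ℓ}, {PV.v j}⟩ : Clause (PV X Y A B)))
  have hsplit := card_filter_add_card_filter_not (s := Υ) fun C => PV.v j ∈ C.neg
  rw [card_univ] at himage
  unfold replaceVClauses at hle
  omega

lemma IsPrimePureHornRep.exists_index_notMem (hΥ : IsPrimePureHornRep Υ (hFun I d t))
    (hfeas : ∀ y, I.CoveredAt Set.univ y) (hj : j ∈ Icc 1 t)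
    (hmin : IsClauseMinimum Υ (hFun I d t))
    (hd : Fintype.card (Lab X Y A B) < d) :
    ∃ i₀ ∈ Icc 1 d, ∀ w ∈ headsOfV Υ j, w.idx ≠ i₀ := by
  have hheads : (headsOfV Υ j).card ≤ (Υ.filter fun C => PV.v j ∈ C.neg).card :=
    card_le_card_of_injOn (fun w => ⟨{w}, {PV.v j}⟩)
      (fun w hw => mem_filter.2 ⟨mem_headsOfV.1 hw, mem_singleton_self _⟩)
      fun _ _ _ _ h => by simpa using congrArg Clause.pos h
  obtain ⟨i₀, hi₀, hnot⟩ := exists_mem_notMem_of_card_lt_card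
    (s := (headsOfV Υ j).image PV.idx) (t := Icc 1 d) <| calc
      _ ≤ (headsOfV Υ j).card := card_image_le
      _ ≤ Fintype.card (Lab X Y A B) := hheads.trans (hΥ.card_filter_v_mem_le hfeas hj hmin)
      _ < (Icc 1 d).card := by simpa using hd
  exact ⟨i₀, hi₀, fun w hw h => hnot (mem_image.2 ⟨w, hw, h⟩)⟩

lemma psi_cutModel {Q : Finset (PV X Y A B)} {i₀ : ℕ} (hy : ∃ x, (x, y) ∈ I.E)
    (hi₀ : i₀ ∈ Icc 1 d) (hQ : ¬ I.CoveredAt (PV.u ⁻¹' Q) y) :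
    evalCNF (PsiCNF I d) (cutModel I Q y i₀) := by
  intro C hC
  rcases mem_PsiCNF.1 hC with hC | hC | hC | hC
  · obtain ⟨x, y', i, α, b, -, -, hc, rfl⟩ := mem_clA.1 hC
    simp [Clause.eval_mk_singleton, cutModel]
    grind
  · obtain ⟨x, y', i, b, hE, -, rfl⟩ := mem_clB.1 hC
    simp [Clause.eval_mk_singleton, cutModel]
    by_cases hyi : y' = y ∧ i = i₀
    · obtain ⟨rfl, rfl⟩ := hyi
      refine Or.inr ?_
      by_contra! hall
      refine hQ ⟨b, (hall x (by simpa [Nbr] using hE) ⟨rfl, rfl⟩).1, fun z hz => ?_⟩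
      obtain ⟨-, α, hα, hc⟩ := hall z (by simpa [Nbr] using hz) ⟨rfl, rfl⟩
      exact ⟨α, hα, hc⟩
    · exact Or.inl (not_and_or.1 hyi)
  · obtain ⟨x, y', i, b, -, -, rfl⟩ := mem_clC.1 hC
    simp [Clause.eval_mk_singleton, cutModel]
    tauto
  · obtain ⟨ℓ, rfl⟩ := mem_clD.1 hC
    obtain ⟨x, hx⟩ := hy
    exact Or.inr ⟨PV.e x y i₀, mem_bigBody.2 ⟨x, y, i₀, hx, hi₀, rfl⟩, by simp [cutModel]⟩

/-- Otherwise `cutModel` at an index `i₀` carried by no head of `v(j)` would be a model of `Ψ`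
that is true on these heads but false on some `u(ℓ)`. -/
lemma IsPrimePureHornRep.coveredAt_headsOfV (hΥ : IsPrimePureHornRep Υ (hFun I d t))
    (hfeas : ∀ y, I.CoveredAt Set.univ y) (hj : j ∈ Icc 1 t)
    (hmin : IsClauseMinimum Υ (hFun I d t))
    (hd : Fintype.card (Lab X Y A B) < d) (hy : ∃ x, (x, y) ∈ I.E) :
    I.CoveredAt (PV.u ⁻¹' headsOfV Υ j) y := by
  obtain ⟨i₀, hi₀, hidx⟩ := hΥ.exists_index_notMem hfeas hj hmin hd
  by_contra hnot
  have hu (ℓ : Lab X Y A B) : cutModel I (headsOfV Υ j) y i₀ (PV.u ℓ) = true :=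
    hΥ.active_of_psi hfeas hj (psi_cutModel hy hi₀ hnot) (fun _ => cutModel_of_mem hidx) trivial
  exact hnot ((hfeas y).mono fun ℓ _ => by simpa [cutModel] using hu ℓ)

lemma IsPrimePureHornRep.one_le_card_fjY (hΥ : IsPrimePureHornRep Υ (hFun I d t))
    (hfeas : ∀ y, I.CoveredAt Set.univ y) (hj : j ∈ Icc 1 t)
    (hmin : IsClauseMinimum Υ (hFun I d t))
    (hd : Fintype.card (Lab X Y A B) < d) (hy : ∃ x, (x, y) ∈ I.E) :
    1 ≤ (fjY Υ j y).card := by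
  obtain ⟨c, hc, -⟩ := hΥ.coveredAt_headsOfV hfeas hj hmin hd hy
  exact card_pos.2 ⟨c, mem_fjY_iff.2 hc⟩

/-- The clauses (a) with `u(y,b)` in their body have heads `e(x,y,b,i)`, which are already true
once `y` is covered. -/
lemma psi_update_of_coveredAt (ha : evalCNF (PsiCNF I d) a)
    (hcov : I.CoveredAt {ℓ | a (PV.u ℓ) = true} y) (b : B) :
    evalCNF (PsiCNF I d) (Function.update a (PV.u (Sum.inr (y, b))) true) := by
  intro C hC
  by_cases hmem : PV.u (Sum.inr (y, b)) ∈ C.neg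
  · obtain ⟨x, i, hE, hi, hpos⟩ :
        ∃ x i, (x, y) ∈ I.E ∧ i ∈ Icc 1 d ∧ C.pos = {PV.el x y b i} := by
      rcases mem_PsiCNF.1 hC with hC | hC | hC | hC
      · obtain ⟨x, y', i, α, b', hE, hi, -, rfl⟩ := mem_clA.1 hC
        obtain ⟨rfl, rfl⟩ : y = y' ∧ b = b' := by simpa using hmem
        exact ⟨x, i, hE, hi, rfl⟩
      · obtain ⟨x, y', i, b', -, -, rfl⟩ := mem_clB.1 hC
        simp at hmem
      · obtain ⟨x, y', i, b', -, -, rfl⟩ := mem_clC.1 hC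
        simp at hmem
      · obtain ⟨ℓ, rfl⟩ := mem_clD.1 hC
        simp [mem_bigBody] at hmem
    refine Or.inl ⟨_, hpos ▸ mem_singleton_self _, ?_⟩
    rw [Function.update_of_ne (by simp)]
    exact psi_el_of_e ha hE hi b (psi_e_of_coveredAt ha hcov hE hi)
  · exact Clause.eval_update_true hmem (ha C hC)

lemma IsPrimePureHornRep.u_of_psi_of_coveredAt (hΥ : IsPrimePureHornRep Υ (hFun I d t))
    (hfeas : ∀ y, I.CoveredAt Set.univ y) (hj : j ∈ Icc 1 t) (ha : evalCNF (PsiCNF I d) a)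
    {b : B} (hheads : ∀ w ∈ (headsOfV Υ j).erase (PV.u (Sum.inr (y, b))), a w = true)
    (hcov : I.CoveredAt {ℓ | a (PV.u ℓ) = true} y) : a (PV.u (Sum.inr (y, b))) = true := by
  have hheads' : ∀ w ∈ headsOfV Υ j, Function.update a (PV.u (Sum.inr (y, b))) true w = true := by
    intro w hw
    by_cases hwb : w = PV.u (Sum.inr (y, b))
    · simp [hwb]
    · rw [Function.update_of_ne hwb]
      exact hheads w (mem_erase.2 ⟨hwb, hw⟩)
  refine psi_u_of_e ha (fun x y' i hE hi => ?_) _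
  have := hΥ.active_of_psi hfeas hj (psi_update_of_coveredAt ha hcov b) hheads'
    (w := PV.e x y' i) ⟨hE, hi⟩
  rwa [Function.update_of_ne (by simp)] at this

lemma IsPrimePureHornRep.represents_erase (hΥ : IsPrimePureHornRep Υ (hFun I d t))
    (hfeas : ∀ y, I.CoveredAt Set.univ y) (hj : j ∈ Icc 1 t) {b : B}
    (hcovb : I.CoveredAt (PV.u ⁻¹' ((headsOfV Υ j).erase (PV.u (Sum.inr (y, b))))) y) :
    Represents (Υ.erase ⟨{PV.u (Sum.inr (y, b))}, {PV.v j}⟩) (hFun I d t) := by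
  intro a
  refine ⟨fun ha => (hΥ.represents a).1 fun C hC => ?_,
    fun hh C hC => (hΥ.represents a).2 hh C (mem_erase.1 hC).2⟩
  by_cases hC₀ : C = ⟨{PV.u (Sum.inr (y, b))}, {PV.v j}⟩
  swap
  · exact ha C (mem_erase.2 ⟨hC₀, hC⟩)
  subst hC₀
  cases hvj : a (PV.v j)
  · exact Or.inr ⟨_, mem_singleton_self _, hvj⟩
  have hpsi : evalCNF (PsiCNF I d) a := hΥ.psi_of_vFree fun C hC hv =>
    ha C (mem_erase.2 ⟨fun h => hv j (h ▸ mem_singleton_self _), hC⟩)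
  have hheads : ∀ w ∈ (headsOfV Υ j).erase (PV.u (Sum.inr (y, b))), a w = true := by
    intro w hw
    obtain ⟨hwb, hw⟩ := mem_erase.1 hw
    exact Clause.head_of_eval (ha _ (mem_erase.2 ⟨by simpa using hwb, mem_headsOfV.1 hw⟩))
      (by simpa using hvj)
  exact Or.inl ⟨_, mem_singleton_self _, hΥ.u_of_psi_of_coveredAt hfeas hj hpsi hheads
    (hcovb.mono fun ℓ hℓ => hheads _ hℓ)⟩

lemma IsPrimePureHornRep.card_fjY_le_one (hΥ : IsPrimePureHornRep Υ (hFun I d t))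
    (hfeas : ∀ y, I.CoveredAt Set.univ y) (hj : j ∈ Icc 1 t)
    (hmin : IsClauseMinimum Υ (hFun I d t))
    (hd : Fintype.card (Lab X Y A B) < d) (hy : ∃ x, (x, y) ∈ I.E) :
    (fjY Υ j y).card ≤ 1 := by
  obtain ⟨c, hc, hwit⟩ := hΥ.coveredAt_headsOfV hfeas hj hmin hd hy
  by_contra! hcard
  obtain ⟨b, hb, hbc⟩ := exists_mem_ne hcard c
  have hcovb : I.CoveredAt (PV.u ⁻¹' ((headsOfV Υ j).erase (PV.u (Sum.inr (y, b))))) y := by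
    refine ⟨c, mem_erase.2 ⟨by simpa using hbc.symm, hc⟩, fun z hz => ?_⟩
    obtain ⟨α, hα, hcst⟩ := hwit z hz
    exact ⟨α, mem_erase.2 ⟨by simp, hα⟩, hcst⟩
  have hle := hmin _ (fun C hC => hΥ.pureHorn C (mem_of_mem_erase hC))
    (hΥ.represents_erase hfeas hj hcovb)
  exact hle.not_gt (card_erase_lt_of_mem (mem_headsOfV.1 (mem_fjY_iff.1 hb)))

end Canonical

theorem fj_exactly_one_label_general
    {X Y A B : Type*} [Fintype X] [Fintype Y] [Fintype A] [Fintype B]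
    [DecidableEq X] [DecidableEq Y] [DecidableEq A] [DecidableEq B]
    (I : LabelCover X Y A B) (d t : ℕ)
    (hd : d = 1 + Fintype.card X * Fintype.card A + Fintype.card Y * Fintype.card B)
    (hnoIsoY : ∀ y : Y, ∃ x, (x, y) ∈ I.E)
    (hfeas : ∃ f g, I.IsTotalCover f g)
    (Υ : Finset (Clause (PV X Y A B)))
    (hPH : IsPureHornCNF Υ)
    (hprime : ∀ C ∈ Υ, PrimeImplicate (hFun I d t) C)
    (hrep : Represents Υ (hFun I d t))
    (hmin : ∀ Υ' : Finset (Clause (PV X Y A B)), IsPureHornCNF Υ' →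
      Represents Υ' (hFun I d t) → Υ.card ≤ Υ'.card) :
    ∀ j ∈ Finset.Icc 1 t, ∀ y : Y,
      1 ≤ (fjY Υ j y).card ∧ (fjY Υ j y).card = 1 := by
  intro j hj y
  obtain ⟨f, g, hfg⟩ := hfeas
  have hΥ : IsPrimePureHornRep Υ (hFun I d t) := ⟨hPH, hprime, hrep⟩
  have hlab : Fintype.card (Lab X Y A B) < d := by
    simp only [Fintype.card_sum, Fintype.card_prod, hd]
    omega
  have hge := hΥ.one_le_card_fjY hfg.coveredAt_univ hj hmin hlab (hnoIsoY y)
  exact ⟨hge, (hΥ.card_fjY_le_one hfg.coveredAt_univ hj hmin hlab (hnoIsoY y)).antisymm hge⟩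

/-- With `d = 1 + rλ + sλ′`, if `Υ` is a clause minimum prime pure
Horn CNF representation of the canonical function `h`, then the labelings `f_j`
extracted from `Υ` satisfy `|f_j(y)| ≥ 1`; combined with the upper bound for prime
irredundant representations, `|f_j(y)| = 1` for all `j ∈ [t]` and `y ∈ Y`. -/
theorem fj_exactly_one_label
    {X Y A B : Type*} [Fintype X] [Fintype Y] [Fintype A] [Fintype B]
    [DecidableEq X] [DecidableEq Y] [DecidableEq A] [DecidableEq B]
    [Nonempty X] [Nonempty Y]
    (I : LabelCover X Y A B) (d t : ℕ) (ht : 1 ≤ t)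
    (hd : d = 1 + Fintype.card X * Fintype.card A + Fintype.card Y * Fintype.card B)
    (hnoIsoX : ∀ x : X, ∃ y, (x, y) ∈ I.E)
    (hnoIsoY : ∀ y : Y, ∃ x, (x, y) ∈ I.E)
    (hfeas : ∃ f g, I.IsTotalCover f g)
    (Υ : Finset (Clause (PV X Y A B)))
    (hPH : IsPureHornCNF Υ)
    (hprime : ∀ C ∈ Υ, PrimeImplicate (hFun I d t) C)
    (hrep : Represents Υ (hFun I d t))
    (hmin : ∀ Υ' : Finset (Clause (PV X Y A B)), IsPureHornCNF Υ' →
      Represents Υ' (hFun I d t) → Υ.card ≤ Υ'.card) :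
    ∀ j ∈ Finset.Icc 1 t, ∀ y : Y,
      1 ≤ (fjY Υ j y).card ∧ (fjY Υ j y).card = 1 :=
  fj_exactly_one_label_general I d t hd hnoIsoY hfeas Υ hPH hprime hrep hmin
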